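/- The pressure function satisfies p(t) = +∞ for every t < 0, and p(t) ≤ (1 + t) log 2 for every t ≥ 0, with p(0) = log 2. -/

import Mathlib

noncomputable def psi (x : ℝ) : ℝ := Real.log (1 - Real.cos (2 * Real.pi * x))

noncomputable def psiSum (n : ℕ) (x : ℝ) : ℝ :=
  ∑ ℓ ∈ Finset.range n, psi (Int.fract ((2:ℝ) ^ ℓ * x))

/-- `A t n = ∑_{ω ∈ Σ^n} sup_{x ∈ ⟨ω⟩} exp(t ψ_n(x))`. -/
noncomputable def A (t : ℝ) (n : ℕ) : ENNReal :=
  ∑ k ∈ Finset.range (2^n),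
    ⨆ y ∈ Set.Icc ((k:ℝ) / 2^n) ((k+1 : ℝ) / 2^n), ENNReal.ofReal (Real.exp (t * psiSum n y))


/-!
Since `1 - cos (2πx) ∈ [0, 2]`, every term of `ψ_n` is at most `log 2`, so for `t ≥ 0` each of the
`2ⁿ` suprema is at most `2^{tn}`, and for `t = 0` each is exactly `1`. For `t < 0` the term `ℓ = 0`
of `ψ_n` tends to `-∞` as `x → 0⁺`, so already the supremum over the cylinder `[0, 2⁻ⁿ]` is infinite.
-/

open Real Filter Topology Set
open scoped ENNReal

lemma psi_int_fract (z : ℝ) : psi (Int.fract z) = psi z := by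
  rw [psi, psi, Int.fract, mul_sub, mul_comm (2 * π) (⌊z⌋ : ℝ), cos_sub_int_mul_two_pi]

lemma psi_le_log_two (x : ℝ) : psi x ≤ log 2 := by
  rcases (sub_nonneg.2 (cos_le_one (2 * π * x))).eq_or_lt with h | h
  · rw [psi, ← h, log_zero]
    positivity
  · exact log_le_log h (by linarith [neg_one_le_cos (2 * π * x)])

lemma psiSum_le (n : ℕ) (x : ℝ) : psiSum n x ≤ n * log 2 :=
  (Finset.sum_le_card_nsmul _ _ _ fun _ _ => psi_le_log_two _).trans_eq (by simp)

lemma psiSum_succ (n : ℕ) (x : ℝ) : psiSum (n + 1) x = psi x + psiSum n (2 * x) := by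
  simp only [psiSum, Finset.sum_range_succ', pow_succ, mul_assoc, pow_zero, one_mul,
    psi_int_fract]
  ring

lemma tendsto_psi_nhdsGT_zero : Tendsto psi (𝓝[>] 0) atBot := by
  refine tendsto_log_nhdsGT_zero.comp (tendsto_nhdsWithin_iff.2 ⟨?_, ?_⟩)
  · have : Continuous fun x : ℝ => 1 - cos (2 * π * x) := by fun_prop
    exact (this.tendsto' 0 0 (by simp)).mono_left nhdsWithin_le_nhds
  · filter_upwards [Ioo_mem_nhdsGT one_pos] with x hx
    have hx' : 2 * π * x ≠ 0 := (mul_pos two_pi_pos hx.1).ne'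
    have hcos : cos (2 * π * x) ≠ 1 := by
      rw [Ne, cos_eq_one_iff_of_lt_of_lt (by nlinarith [pi_pos, hx.1]) (by nlinarith [pi_pos, hx.2])]
      exact hx'
    exact sub_pos.2 ((cos_le_one _).lt_of_ne hcos)

lemma tendsto_psiSum_nhdsGT_zero {n : ℕ} (hn : n ≠ 0) : Tendsto (psiSum n) (𝓝[>] 0) atBot := by
  obtain ⟨m, rfl⟩ := Nat.exists_eq_succ_of_ne_zero hn
  refine tendsto_atBot_mono (fun x => ?_)
    (tendsto_psi_nhdsGT_zero.atBot_add (tendsto_const_nhds (x := m * log 2)))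
  rw [psiSum_succ]
  exact add_le_add_right (psiSum_le m (2 * x)) _

lemma biSup_ofReal_exp_mul_eq_top {α : Type*} {l : Filter α} [l.NeBot] {f : α → ℝ} {s : Set α}
    {t : ℝ} (ht : t < 0) (hf : Tendsto f l atBot) (hs : s ∈ l) :
    ⨆ y ∈ s, ENNReal.ofReal (exp (t * f y)) = ∞ := by
  have h : Tendsto (fun y => ENNReal.ofReal (exp (t * f y))) l (𝓝 ∞) :=
    ENNReal.tendsto_ofReal_atTop.comp (tendsto_exp_atTop.comp (hf.const_mul_atBot_of_neg ht))
  exact top_unique (le_of_tendsto h (eventually_of_mem hs fun y hy => le_biSup (fun y => ENNReal.ofReal (exp (t * f y))) hy))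

lemma A_eq_top {t : ℝ} (ht : t < 0) {n : ℕ} (hn : n ≠ 0) : A t n = ∞ := by
  refine ENNReal.sum_eq_top.2 ⟨0, by simp, biSup_ofReal_exp_mul_eq_top ht
    (tendsto_psiSum_nhdsGT_zero hn) ?_⟩
  simpa using Icc_mem_nhdsGT (by positivity : (0 : ℝ) < 1 / 2 ^ n)

lemma A_le_two_pow_mul {t : ℝ} {n : ℕ} {c : ℝ≥0∞}
    (hc : ∀ y, ENNReal.ofReal (exp (t * psiSum n y)) ≤ c) : A t n ≤ 2 ^ n * c :=
  calc A t n ≤ ∑ _k ∈ Finset.range (2 ^ n), c :=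
        Finset.sum_le_sum fun _ _ => iSup₂_le fun y _ => hc y
    _ = 2 ^ n * c := by simp

lemma ofReal_exp_log_two_mul (n : ℕ) : ENNReal.ofReal (exp (log 2 * n)) = 2 ^ n := by
  rw [mul_comm, exp_nat_mul, exp_log two_pos, ENNReal.ofReal_pow zero_le_two, ENNReal.ofReal_ofNat]

lemma A_le {t : ℝ} (ht : 0 ≤ t) (n : ℕ) : A t n ≤ ENNReal.ofReal (exp ((1 + t) * log 2 * n)) :=
  calc A t n ≤ 2 ^ n * ENNReal.ofReal (exp (t * (n * log 2))) :=
        A_le_two_pow_mul fun y => by gcongr; exact psiSum_le n y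
    _ = ENNReal.ofReal (exp ((1 + t) * log 2 * n)) := by
        rw [← ofReal_exp_log_two_mul, ← ENNReal.ofReal_mul (exp_pos _).le, ← exp_add]
        ring_nf

lemma A_zero (n : ℕ) : A 0 n = ENNReal.ofReal (exp (log 2 * n)) := by
  have hIcc (k : ℕ) : (Icc ((k : ℝ) / 2 ^ n) ((k + 1 : ℝ) / 2 ^ n)).Nonempty :=
    nonempty_Icc.2 (by gcongr; linarith)
  simp only [A, zero_mul, exp_zero, ENNReal.ofReal_one, biSup_const (hIcc _)]
  simp [ofReal_exp_log_two_mul]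

lemma log_ofReal_exp_mul_div_natCast (c : ℝ) {n : ℕ} (hn : n ≠ 0) :
    ENNReal.log (ENNReal.ofReal (exp (c * n))) / n = c := by
  rw [ENNReal.log_ofReal_of_pos (exp_pos _), log_exp, ← EReal.coe_coe_eq_natCast, ← EReal.coe_div,
    mul_div_cancel_right₀ _ (Nat.cast_ne_zero.2 hn)]

theorem pressure_basic_values (p : ℝ → EReal)
    (hp : ∀ t : ℝ, Filter.Tendsto (fun n : ℕ => ENNReal.log (A t n) / (n : EReal))
      Filter.atTop (nhds (p t))) :
    (∀ t : ℝ, t < 0 → p t = ⊤) ∧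
    (∀ t : ℝ, 0 ≤ t → p t ≤ (((1 + t) * Real.log 2 : ℝ) : EReal)) ∧
    p 0 = ((Real.log 2 : ℝ) : EReal) := by
  have limit_eq {t : ℝ} {x : EReal} (h : ∀ᶠ n : ℕ in atTop, ENNReal.log (A t n) / n = x) :
      p t = x :=
    tendsto_nhds_unique (hp t) (tendsto_const_nhds.congr' (h.mono fun _ h => h.symm))
  refine ⟨fun t ht => limit_eq ?_, fun t ht => le_of_tendsto (hp t) ?_, limit_eq ?_⟩ <;>
    filter_upwards [eventually_ne_atTop 0] with n hn
  · rw [A_eq_top ht hn, ENNReal.log_top]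
    exact EReal.top_div_of_pos_ne_top (by exact_mod_cast Nat.pos_of_ne_zero hn)
      (EReal.natCast_ne_top n)
  · rw [← log_ofReal_exp_mul_div_natCast _ hn]
    exact EReal.div_le_div_right_of_nonneg (Nat.cast_nonneg' n) (ENNReal.log_le_log (A_le ht n))
  · rw [A_zero, log_ofReal_exp_mul_div_natCast _ hn]
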